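/- For n = 2 (the full flag manifold SU(3)/T²), every Einstein solution λ = (λ₁₂, λ₁₃, λ₂₃) has scale invariant H(λ) equal to either 5/2 or 2^{4/3}. -/

import Mathlib

open Finset

/-- Pairs `i < j` in `{1, …, n+1}` (modeled as `Fin (n+1)`), indexing the
positive roots / isotropy summands of the full flag manifold `SU(n+1)/Tⁿ`. -/
abbrev FlagIdx (n : ℕ) := {p : Fin (n + 1) × Fin (n + 1) // p.1 < p.2}

/-- Symmetric extension `λ_{ji} := λ_{ij}` of a family indexed by pairs `i < j`.
(The diagonal value is irrelevant; we set it to `1`.) -/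
def symExt (n : ℕ) (lam : FlagIdx n → ℝ) (i j : Fin (n + 1)) : ℝ :=
  if h : i < j then lam ⟨(i, j), h⟩
  else if h : j < i then lam ⟨(j, i), h⟩
  else 1

/-- Sakane's formula for the component `r_{ij}` of the Ricci tensor of the
invariant metric determined by `lam` on `SU(n+1)/Tⁿ`. -/
noncomputable def ricci (n : ℕ) (lam : FlagIdx n → ℝ) (i j : Fin (n + 1)) : ℝ :=
  1 / (2 * symExt n lam i j) + (1 / (4 * ((n : ℝ) + 1))) *
    ∑ k ∈ univ.filter (fun k : Fin (n + 1) => k ≠ i ∧ k ≠ j),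
      (symExt n lam i j / (symExt n lam i k * symExt n lam k j)
        - symExt n lam i k / (symExt n lam i j * symExt n lam k j)
        - symExt n lam j k / (symExt n lam i j * symExt n lam i k))

/-- `lam` is an Einstein solution with Einstein constant `k`:
`r_{ij}(lam) = k` for all `1 ≤ i < j ≤ n+1`. -/
def IsEinstein (n : ℕ) (lam : FlagIdx n → ℝ) (k : ℝ) : Prop :=
  ∀ i j : Fin (n + 1), i < j → ricci n lam i j = k

/-- Scalar curvature `S(λ) = 2 Σ_{i<j} r_{ij}(λ)`. -/
noncomputable def scalarCurv (n : ℕ) (lam : FlagIdx n → ℝ) : ℝ :=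
  2 * ∑ p : FlagIdx n, ricci n lam p.1.1 p.1.2

/-- Volume `V(λ) = Π_{i<j} λ_{ij}²`. -/
noncomputable def vol (n : ℕ) (lam : FlagIdx n → ℝ) : ℝ :=
  ∏ p : FlagIdx n, (lam p) ^ 2

/-- Scale invariant `H(λ) = V(λ)^{1/d} · S(λ)`, where `d = n(n+1)`. -/
noncomputable def scaleInv (n : ℕ) (lam : FlagIdx n → ℝ) : ℝ :=
  vol n lam ^ ((1 : ℝ) / ((n : ℝ) * ((n : ℝ) + 1))) * scalarCurv n lam

/-- The Kähler–Einstein tuple `λ_{ij} = |σ(i) − σ(j)|` associated to a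
permutation `σ` (i.e. to an order of the root system). -/
noncomputable def kahlerFam (n : ℕ) (σ : Equiv.Perm (Fin (n + 1))) : FlagIdx n → ℝ :=
  fun p => |((σ p.1.1 : ℕ) : ℝ) - ((σ p.1.2 : ℕ) : ℝ)|

/-- The family `λ_{ij} = n/(n+2)` if `t ∈ {i, j}`, and `λ_{ij} = 1` otherwise. -/
noncomputable def tFam (n : ℕ) (t : Fin (n + 1)) : FlagIdx n → ℝ :=
  fun p => if p.1.1 = t ∨ p.1.2 = t then (n : ℝ) / ((n : ℝ) + 2) else 1

/-- Two families are proportional if one is a positive scalar multiple of the other. -/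
def Proportional (n : ℕ) (f g : FlagIdx n → ℝ) : Prop :=
  ∃ c : ℝ, 0 < c ∧ ∀ p, f p = c * g p

section helpers

lemma pow6_rpow {x : ℝ} (hx : 0 < x) : (x ^ 6) ^ ((1:ℝ)/6) = x := by
  rw [← Real.rpow_natCast x 6, ← Real.rpow_mul hx.le]
  norm_num

lemma helperA {x : ℝ} (hx : 0 < x) :
    ((4 * x ^ 6)) ^ ((1:ℝ)/6) * (2 / x) = (2:ℝ) ^ ((4:ℝ)/3) := by
  rw [Real.mul_rpow (by norm_num) (pow_nonneg hx.le 6), pow6_rpow hx]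
  have h4 : (4:ℝ) ^ ((1:ℝ)/6) = 2 ^ ((1:ℝ)/3) := by
    rw [show (4:ℝ) = 2 ^ (2:ℕ) by norm_num, ← Real.rpow_natCast 2 2,
      ← Real.rpow_mul (by norm_num)]
    norm_num
  rw [h4]
  have : (2:ℝ) ^ ((1:ℝ)/3) * x * (2 / x) = 2 ^ ((1:ℝ)/3) * 2 := by
    field_simp
  rw [this, show ((4:ℝ)/3) = 1/3 + 1 by norm_num,
    Real.rpow_add (by norm_num), Real.rpow_one]

end helpers

set_option maxHeartbeats 2000000


/-- For `n = 2` (the flag manifold `SU(3)/T²`), every Einstein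
solution `(λ₁₂, λ₁₃, λ₂₃)` of positive reals has scale invariant equal to
either `5/2` or `2^{4/3}`. -/
theorem su3_scaleInv_dichotomy (lam : FlagIdx 2 → ℝ) (hpos : ∀ p, 0 < lam p)
    (h : ∃ k : ℝ, IsEinstein 2 lam k) :
    scaleInv 2 lam = 5 / 2 ∨ scaleInv 2 lam = (2 : ℝ) ^ ((4 : ℝ) / 3) := by
  set a := lam ⟨(0,1), by decide⟩ with ha_def
  set b := lam ⟨(0,2), by decide⟩ with hb_def
  set c := lam ⟨(1,2), by decide⟩ with hc_def
  have ha : 0 < a := hpos _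
  have hb : 0 < b := hpos _
  have hc : 0 < c := hpos _
  have huniv : (univ : Finset (FlagIdx 2)) =
      {⟨(0,1), by decide⟩, ⟨(0,2), by decide⟩, ⟨(1,2), by decide⟩} := by decide
  have hr01 : ricci 2 lam 0 1 =
      1/(2*a) + (1/12) * (a/(b*c) - b/(a*c) - c/(a*b)) := by
    have hf : (univ.filter (fun k : Fin 3 => k ≠ 0 ∧ k ≠ 1)) = {2} := by decide
    rw [ricci, hf]; simp [symExt]; norm_num; rfl
  have hr02 : ricci 2 lam 0 2 =
      1/(2*b) + (1/12) * (b/(a*c) - a/(b*c) - c/(b*a)) := by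
    have hf : (univ.filter (fun k : Fin 3 => k ≠ 0 ∧ k ≠ 2)) = {1} := by decide
    rw [ricci, hf]; simp [symExt]; norm_num; rfl
  have hr12 : ricci 2 lam 1 2 =
      1/(2*c) + (1/12) * (c/(a*b) - a/(c*b) - b/(c*a)) := by
    have hf : (univ.filter (fun k : Fin 3 => k ≠ 1 ∧ k ≠ 2)) = {0} := by decide
    rw [ricci, hf]; simp [symExt]; norm_num; rfl
  obtain ⟨k, hk⟩ := h
  have e01 := hk 0 1 (by decide)
  have e02 := hk 0 2 (by decide)
  have e12 := hk 1 2 (by decide)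
  rw [hr01] at e01; rw [hr02] at e02; rw [hr12] at e12
  have ha' := ha.ne'
  have hb' := hb.ne'
  have hc' := hc.ne'
  have key1 : (b - a) * (3*c - a - b) = 0 := by
    have h0 : (1/(2*a) + (1/12) * (a/(b*c) - b/(a*c) - c/(a*b)))
        - (1/(2*b) + (1/12) * (b/(a*c) - a/(b*c) - c/(b*a))) = 0 := by
      rw [e01, e02]; ring
    have h1 : (b - a) * (3*c - a - b) = (6*a*b*c) *
        ((1/(2*a) + (1/12) * (a/(b*c) - b/(a*c) - c/(a*b)))
        - (1/(2*b) + (1/12) * (b/(a*c) - a/(b*c) - c/(b*a)))) := by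
      field_simp; ring
    rw [h1, h0, mul_zero]
  have key2 : (c - a) * (3*b - a - c) = 0 := by
    have h0 : (1/(2*a) + (1/12) * (a/(b*c) - b/(a*c) - c/(a*b)))
        - (1/(2*c) + (1/12) * (c/(a*b) - a/(c*b) - b/(c*a))) = 0 := by
      rw [e01, e12]; ring
    have h1 : (c - a) * (3*b - a - c) = (6*a*b*c) *
        ((1/(2*a) + (1/12) * (a/(b*c) - b/(a*c) - c/(a*b)))
        - (1/(2*c) + (1/12) * (c/(a*b) - a/(c*b) - b/(c*a)))) := by
      field_simp; ring
    rw [h1, h0, mul_zero]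
  have key3 : (c - b) * (3*a - b - c) = 0 := by
    have h0 : (1/(2*b) + (1/12) * (b/(a*c) - a/(b*c) - c/(b*a)))
        - (1/(2*c) + (1/12) * (c/(a*b) - a/(c*b) - b/(c*a))) = 0 := by
      rw [e02, e12]; ring
    have h1 : (c - b) * (3*a - b - c) = (6*a*b*c) *
        ((1/(2*b) + (1/12) * (b/(a*c) - a/(b*c) - c/(b*a)))
        - (1/(2*c) + (1/12) * (c/(a*b) - a/(c*b) - b/(c*a)))) := by
      field_simp; ring
    rw [h1, h0, mul_zero]
  have hvol : vol 2 lam = (a*b*c)^2 := by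
    rw [vol, huniv]
    rw [Finset.prod_insert (by decide), Finset.prod_insert (by decide),
      Finset.prod_singleton]
    ring
  have hS : scalarCurv 2 lam = 2 * (ricci 2 lam 0 1 + ricci 2 lam 0 2 + ricci 2 lam 1 2) := by
    rw [scalarCurv, huniv]
    rw [Finset.sum_insert (by decide), Finset.sum_insert (by decide),
      Finset.sum_singleton]
    norm_num
    ring
  rw [hr01, hr02, hr12] at hS
  have hH : scaleInv 2 lam = ((a*b*c)^2) ^ ((1:ℝ)/6) *
      (2 * ((1/(2*a) + (1/12) * (a/(b*c) - b/(a*c) - c/(a*b)))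
        + (1/(2*b) + (1/12) * (b/(a*c) - a/(b*c) - c/(b*a)))
        + (1/(2*c) + (1/12) * (c/(a*b) - a/(c*b) - b/(c*a))))) := by
    rw [scaleInv, hvol, hS]; norm_num
  -- case analysis
  rcases mul_eq_zero.mp key1 with k1 | k1 <;>
  rcases mul_eq_zero.mp key2 with k2 | k2 <;>
  rcases mul_eq_zero.mp key3 with k3 | k3
  · -- b=a, c=a, c=b : equal
    left
    have hba : b = a := by linarith
    have hca : c = a := by linarith
    rw [hba, hca] at hH
    have h1 : (a*a*a)^2 = a^6 := by ring
    have h2 : (2 * ((1/(2*a) + (1/12) * (a/(a*a) - a/(a*a) - a/(a*a)))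
        + (1/(2*a) + (1/12) * (a/(a*a) - a/(a*a) - a/(a*a)))
        + (1/(2*a) + (1/12) * (a/(a*a) - a/(a*a) - a/(a*a))))) = 5/(2*a) := by
      field_simp; ring
    rw [h1, h2] at hH
    rw [hH, pow6_rpow ha]
    field_simp
  · -- b=a, c=a, 3a=b+c : a=0 contra
    exfalso; linarith
  · -- b=a, c=2a (from 3b=a+c), c=b : contra
    exfalso; linarith
  · -- b=a, 3b=a+c (c=2a), 3a=b+c : (a,a,2a)
    right
    have hba : b = a := by linarith
    have hca : c = 2*a := by linarith
    rw [hba, hca] at hH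
    have h1 : (a*a*(2*a))^2 = 4 * a^6 := by ring
    have h2 : (2 * ((1/(2*a) + (1/12) * (a/(a*(2*a)) - a/(a*(2*a)) - 2*a/(a*a)))
        + (1/(2*a) + (1/12) * (a/(a*(2*a)) - a/(a*(2*a)) - 2*a/(a*a)))
        + (1/(2*(2*a)) + (1/12) * (2*a/(a*a) - a/(2*a*a) - a/(2*a*a))))) = 2/a := by
      field_simp; ring
    rw [h1, h2] at hH
    rw [hH]; exact helperA ha
  · -- 3c=a+b, c=a, c=b : contra
    exfalso; linarith
  · -- 3c=a+b, c=a, 3a=b+c : b=2a, tuple (a,2a,a)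
    right
    have hca : c = a := by linarith
    have hba : b = 2*a := by linarith
    rw [hba, hca] at hH
    have h1 : (a*(2*a)*a)^2 = 4 * a^6 := by ring
    have h2 : (2 * ((1/(2*a) + (1/12) * (a/(2*a*a) - 2*a/(a*a) - a/(a*(2*a))))
        + (1/(2*(2*a)) + (1/12) * (2*a/(a*a) - a/(2*a*a) - a/(2*a*a)))
        + (1/(2*a) + (1/12) * (a/(a*(2*a)) - a/(a*(2*a)) - 2*a/(a*a))))) = 2/a := by
      field_simp; ring
    rw [h1, h2] at hH
    rw [hH]; exact helperA ha
  · -- 3c=a+b, 3b=a+c, c=b : a=2b, tuple (2b,b,b)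
    right
    have hcb : c = b := by linarith
    have hab : a = 2*b := by linarith
    rw [hab, hcb] at hH
    have h1 : (2*b*b*b)^2 = 4 * b^6 := by ring
    have h2 : (2 * ((1/(2*(2*b)) + (1/12) * (2*b/(b*b) - b/(2*b*b) - b/(2*b*b)))
        + (1/(2*b) + (1/12) * (b/(2*b*b) - 2*b/(b*b) - b/(b*(2*b))))
        + (1/(2*b) + (1/12) * (b/(2*b*b) - 2*b/(b*b) - b/(b*(2*b)))))) = 2/b := by
      field_simp; ring
    rw [h1, h2] at hH
    rw [hH]; exact helperA hb
  · -- all three nondegenerate: contra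
    exfalso; linarith
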